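/- Let 𝒜 : ℝ → Matrix (Fin (2m)) (Fin (2m)) ℝ be a family of symmetric matrices with entries differentiable at θ₀, let X = [[0, I_m], [I_m, 0]], and suppose X − 𝒜(θ₀) is invertible and det(I − X·𝒜(θ)) > 0 near θ₀. For n̄ = (n_1,…,n_m) ∈ ℕ^m define P(θ, n̄) = (det(I − X·𝒜(θ)))^{1/2} · Haf(𝒜(θ)_{n̄ ⊕ n̄}) / (n_1! ⋯ n_m!), where n̄ ⊕ n̄ = (n_1,…,n_m,n_1,…,n_m) ∈ ℕ^{2m}. Then θ ↦ P(θ, n̄) is differentiable at θ₀ with derivative −(1/2)·Tr[(X − 𝒜)^{-1} 𝒜'] · P(θ₀, n̄) + (det(I − X𝒜))^{1/2}/(n_1!⋯n_m!) · (1/2) · Σ_{i ≠ j} ((𝒜')_{n̄ ⊕ n̄})_{ij} · Haf((𝒜_{n̄ ⊕ n̄})_{−i−j}), all matrices evaluated at θ₀, with 𝒜' the entrywise derivative. -/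

import Mathlib

/-!
Jacobi's formula differentiates `det (1 - X 𝒜)` to `-det (1 - X 𝒜) · Tr ((1 - X 𝒜)⁻¹ X 𝒜')`,
and `(1 - X 𝒜)⁻¹ X = (X - 𝒜)⁻¹` because `X² = 1`; the square root halves this logarithmic
derivative.

The hafnian is a sum over perfect matchings of products of one entry per pair, so the product
rule differentiates one pair `{i, j}` at a time. The matchings containing `{i, j}` are exactly
the perfect matchings of the remaining indices, so the terms with `𝒜'ᵢⱼ` add up to
`𝒜'ᵢⱼ · Haf (𝒜₋ᵢ₋ⱼ)`. Each unordered pair appears twice among the ordered pairs `i ≠ j`, and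
the symmetry of `𝒜'` makes both contributions equal, whence the factor `1 / 2`.
-/

open Finset Matrix

open scoped Classical in
/-- The hafnian of a matrix: the sum over all perfect matchings of the index set
(encoded as fixed-point-free involutions `σ`), of the product of the entries
`A i (σ i)` over the pairs `{i, σ i}` (each pair taken once, via `i < σ i`).
For an empty index type this is `1`, and for an odd-cardinality index type it is `0`. -/
noncomputable def hafnian {ι : Type*} [Fintype ι] [LinearOrder ι] {R : Type*} [CommRing R]
    (A : Matrix ι ι R) : R :=
  ∑ σ ∈ Finset.univ.filter
      (fun σ : Equiv.Perm ι => σ * σ = 1 ∧ ∀ i, σ i ≠ i),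
    ∏ i ∈ Finset.univ.filter (fun i => i < σ i), A i (σ i)

/-- The index type for `A_v` (row/column `i` repeated `v i` times), ordered
lexicographically. -/
instance repIdxFintype {M : ℕ} (v : Fin M → ℕ) : Fintype (Σₗ i : Fin M, Fin (v i)) :=
  inferInstanceAs (Fintype ((i : Fin M) × Fin (v i)))

/-- `A_v`: the matrix obtained from the `M × M` matrix `A` by repeating row and column `i`
exactly `v i` times (deleting them when `v i = 0`). -/
def repMat {M : ℕ} {R : Type*} (A : Matrix (Fin M) (Fin M) R) (v : Fin M → ℕ) :
    Matrix (Σₗ i : Fin M, Fin (v i)) (Σₗ i : Fin M, Fin (v i)) R :=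
  A.submatrix (fun p => (ofLex p).1) (fun p => (ofLex p).1)

/-- `B_{−i−j}`: the matrix obtained from `B` by deleting rows `i, j` and columns `i, j`. -/
def delTwo {ι : Type*} {R : Type*} (A : Matrix ι ι R) (i j : ι) :
    Matrix {k : ι // k ≠ i ∧ k ≠ j} {k : ι // k ≠ i ∧ k ≠ j} R :=
  A.submatrix Subtype.val Subtype.val

/-- The `2m × 2m` block matrix `X = [[0, I_m], [I_m, 0]]`. -/
def Xswap (m : ℕ) : Matrix (Fin (2 * m)) (Fin (2 * m)) ℝ :=
  Matrix.of fun i j => if (i : ℕ) = (j : ℕ) + m ∨ (j : ℕ) = (i : ℕ) + m then 1 else 0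

/-- `n̄ ⊕ n̄ = (n_1,…,n_m,n_1,…,n_m) ∈ ℕ^{2m}`. -/
def doubled {m : ℕ} (n : Fin m → ℕ) : Fin (2 * m) → ℕ := fun i =>
  if h : (i : ℕ) < m then n ⟨i, h⟩ else n ⟨(i : ℕ) - m, by have := i.isLt; omega⟩

section Jacobi

variable {ι : Type*} [Fintype ι] [DecidableEq ι]

theorem Matrix.det_updateCol_col_eq_adjugate_mul_apply {R : Type*} [CommRing R]
    (A B : Matrix ι ι R) (i : ι) :
    (A.updateCol i fun r => B r i).det = (A.adjugate * B) i i := by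
  rw [← cramer_apply, cramer_eq_adjugate_mulVec]
  rfl

theorem hasDerivAt_det {𝕜 : Type*} [NontriviallyNormedField 𝕜] {M : 𝕜 → Matrix ι ι 𝕜}
    {M' : Matrix ι ι 𝕜} {θ₀ : 𝕜} (hM : ∀ i j, HasDerivAt (fun θ => M θ i j) (M' i j) θ₀) :
    HasDerivAt (fun θ => (M θ).det) ((M θ₀).adjugate * M').trace θ₀ := by
  simp_rw [det_apply']
  refine (HasDerivAt.fun_sum fun σ _ => (HasDerivAt.fun_finsetProd fun k _ =>
    hM (σ k) k).const_mul (Equiv.Perm.sign σ : 𝕜)).congr_deriv ?_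
  simp only [trace, Matrix.diag, ← det_updateCol_col_eq_adjugate_mul_apply, det_apply',
    Finset.mul_sum]
  rw [Finset.sum_comm]
  refine Finset.sum_congr rfl fun k _ => Finset.sum_congr rfl fun σ _ => ?_
  rw [← Finset.mul_prod_erase _ (fun l => (M θ₀).updateCol k (fun r => M' r k) (σ l) l)
    (Finset.mem_univ k), updateCol_self, smul_eq_mul,
    Finset.prod_congr rfl fun l hl => updateCol_ne (Finset.ne_of_mem_erase hl)]
  ring

end Jacobi

namespace Xswap

def partner {m : ℕ} (i : Fin (2 * m)) : Fin (2 * m) :=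
  ⟨if (i : ℕ) < m then i + m else i - m, by split <;> omega⟩

theorem partner_partner {m : ℕ} (i : Fin (2 * m)) : partner (partner i) = i := by
  simp only [partner, Fin.ext_iff]
  split_ifs <;> omega

theorem apply_eq {m : ℕ} (i j : Fin (2 * m)) :
    Xswap m i j = if j = partner i then 1 else 0 := by
  have : ((i : ℕ) = j + m ∨ (j : ℕ) = i + m) ↔ j = partner i := by
    simp only [partner, Fin.ext_iff]
    split <;> omega
  simp only [Xswap, of_apply, this]

theorem mul_self (m : ℕ) : Xswap m * Xswap m = 1 := by
  ext i j
  simp only [mul_apply, apply_eq, ite_mul, one_mul, zero_mul, Finset.sum_ite_eq',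
    Finset.mem_univ, if_true, partner_partner, one_apply, eq_comm]

end Xswap

section GaussianDet

variable {m : ℕ} {A : ℝ → Matrix (Fin (2 * m)) (Fin (2 * m)) ℝ}
  {A' : Matrix (Fin (2 * m)) (Fin (2 * m)) ℝ} {θ₀ : ℝ}

theorem hasDerivAt_det_one_sub_Xswap_mul
    (hA : ∀ i j, HasDerivAt (fun θ => A θ i j) (A' i j) θ₀)
    (hdet : (1 - Xswap m * A θ₀).det ≠ 0) :
    HasDerivAt (fun θ => (1 - Xswap m * A θ).det)
      (-(1 - Xswap m * A θ₀).det * trace ((Xswap m - A θ₀)⁻¹ * A')) θ₀ := by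
  have hentry : ∀ i j, HasDerivAt (fun θ => (1 - Xswap m * A θ) i j)
      ((-(Xswap m * A')) i j) θ₀ := by
    intro i j
    simp only [Matrix.sub_apply, Matrix.neg_apply, mul_apply]
    exact (HasDerivAt.fun_sum fun k _ => (hA k j).const_mul (Xswap m i k)).const_sub _
  refine (hasDerivAt_det hentry).congr_deriv ?_
  -- `1 - X A = X (X - A)` and `X⁻¹ = X`
  have hinv : (1 - Xswap m * A θ₀)⁻¹ * Xswap m = (Xswap m - A θ₀)⁻¹ := by
    rw [← Xswap.mul_self m, ← Matrix.mul_sub, Matrix.mul_inv_rev,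
      Matrix.inv_eq_left_inv (Xswap.mul_self m), Matrix.mul_assoc, Xswap.mul_self,
      Matrix.mul_one]
  have hadj : (1 - Xswap m * A θ₀).adjugate
      = (1 - Xswap m * A θ₀).det • (1 - Xswap m * A θ₀)⁻¹ := by
    rw [Matrix.inv_def, smul_smul, Ring.mul_inverse_cancel _ (isUnit_iff_ne_zero.2 hdet),
      one_smul]
  rw [hadj, Matrix.mul_neg, trace_neg, smul_mul, trace_smul, ← Matrix.mul_assoc, hinv,
    smul_eq_mul, neg_mul]

theorem hasDerivAt_sqrt_det_one_sub_Xswap_mul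
    (hA : ∀ i j, HasDerivAt (fun θ => A θ i j) (A' i j) θ₀)
    (hdet : 0 < (1 - Xswap m * A θ₀).det) :
    HasDerivAt (fun θ => √(1 - Xswap m * A θ).det)
      (-(1 / 2) * trace ((Xswap m - A θ₀)⁻¹ * A') * √(1 - Xswap m * A θ₀).det) θ₀ := by
  refine ((hasDerivAt_det_one_sub_Xswap_mul hA hdet.ne').sqrt hdet.ne').congr_deriv ?_
  have hsqrt : √(1 - Xswap m * A θ₀).det * √(1 - Xswap m * A θ₀).det
      = (1 - Xswap m * A θ₀).det := Real.mul_self_sqrt hdet.le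
  field_simp
  linear_combination trace ((Xswap m - A θ₀)⁻¹ * A') * hsqrt

end GaussianDet

theorem Equiv.swap_mul_ofSubtype_apply {α : Type*} [DecidableEq α] {i j : α}
    (τ : Equiv.Perm {k : α // k ≠ i ∧ k ≠ j}) (a : α) :
    (Equiv.swap i j * Equiv.Perm.ofSubtype τ) a
      = if h : a ≠ i ∧ a ≠ j then (τ ⟨a, h⟩ : α) else Equiv.swap i j a := by
  rw [Equiv.Perm.mul_apply]
  split_ifs with h
  · rw [Equiv.Perm.ofSubtype_apply_of_mem τ h]
    exact Equiv.swap_apply_of_ne_of_ne (τ ⟨a, h⟩).2.1 (τ ⟨a, h⟩).2.2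
  · rw [Equiv.Perm.ofSubtype_apply_of_not_mem τ h]

section Hafnian

variable {ι R : Type*} [Fintype ι] [LinearOrder ι] [CommRing R]

theorem two_nsmul_sum_filter_lt_apply {M : Type*} [AddCommMonoid M] {σ : Equiv.Perm ι}
    (hσ : ∀ i, σ (σ i) = i) (hfix : ∀ i, σ i ≠ i) {g : ι → M} (hg : ∀ i, g (σ i) = g i) :
    2 • ∑ i ∈ univ.filter (fun i => i < σ i), g i = ∑ i, g i := by
  rw [← sum_filter_add_sum_filter_not univ (fun i => i < σ i), two_nsmul]
  congr 1
  refine sum_nbij' σ σ (fun i hi => ?_) (fun i hi => ?_) (fun i _ => hσ i) (fun i _ => hσ i)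
    (fun i _ => (hg i).symm)
  · simp only [mem_filter, mem_univ, true_and, hσ] at hi ⊢
    exact hi.asymm
  · simp only [mem_filter, mem_univ, true_and] at hi ⊢
    rw [hσ]
    exact (hfix i).symm.lt_or_gt.resolve_left hi

theorem filter_lt_apply_erase {σ : Equiv.Perm ι} (hσ : ∀ i, σ (σ i) = i) {k : ι}
    (hk : k < σ k) :
    (univ.filter fun l => l < σ l).erase k = univ.filter fun l => l < σ l ∧ l ≠ k ∧ l ≠ σ k := by
  ext l
  simp only [mem_erase, mem_filter, mem_univ, true_and]
  constructor
  · rintro ⟨hlk, hl⟩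
    refine ⟨hl, hlk, ?_⟩
    rintro rfl
    rw [hσ] at hl
    exact hl.asymm hk
  · rintro ⟨hl, hlk, -⟩
    exact ⟨hlk, hl⟩

variable (ι) in
def perfectMatchings : Finset (Equiv.Perm ι) :=
  univ.filter fun σ => σ * σ = 1 ∧ ∀ i, σ i ≠ i

theorem mem_perfectMatchings {σ : Equiv.Perm ι} :
    σ ∈ perfectMatchings ι ↔ (∀ i, σ (σ i) = i) ∧ ∀ i, σ i ≠ i := by
  simp [perfectMatchings, Equiv.ext_iff]

theorem hafnian_eq_sum_perfectMatchings (A : Matrix ι ι R) :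
    hafnian A = ∑ σ ∈ perfectMatchings ι, ∏ i ∈ univ.filter (fun i => i < σ i), A i (σ i) :=
  rfl

/-- `τ ↦ swap i j * τ` identifies the perfect matchings of `ι ∖ {i, j}` with those of `ι`
that pair `i` with `j`. -/
theorem hafnian_delTwo (B : Matrix ι ι R) {i j : ι} (hij : i ≠ j) :
    hafnian (delTwo B i j) =
      ∑ σ ∈ (perfectMatchings ι).filter (fun σ => σ i = j),
        ∏ k ∈ univ.filter (fun k => k < σ k ∧ k ≠ i ∧ k ≠ j), B k (σ k) := by
  have hrestrict : ∀ σ ∈ (perfectMatchings ι).filter (fun σ => σ i = j),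
      ∀ k, (σ k ≠ i ∧ σ k ≠ j) ↔ (k ≠ i ∧ k ≠ j) := by
    intro σ hσ k
    obtain ⟨⟨hσσ, -⟩, hσi⟩ := mem_filter.1 hσ |>.imp_left mem_perfectMatchings.1
    have hσj : σ j = i := by rw [← hσi, hσσ]
    constructor <;> rintro ⟨hi, hj⟩ <;> constructor <;> rintro rfl
    all_goals simp_all
  rw [hafnian_eq_sum_perfectMatchings]
  refine sum_bij' (fun τ _ => Equiv.swap i j * Equiv.Perm.ofSubtype τ)
    (fun σ hσ => σ.subtypePerm (hrestrict σ hσ)) ?_ ?_ ?_ ?_ ?_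
  · intro τ hτ
    rw [mem_perfectMatchings] at hτ
    simp only [mem_filter, mem_perfectMatchings, Equiv.swap_mul_ofSubtype_apply]
    refine ⟨⟨fun a => ?_, fun a => ?_⟩, by simp⟩
    · by_cases ha : a ≠ i ∧ a ≠ j
      · simp [ha, (τ ⟨a, ha⟩).2, hτ.1]
      · obtain rfl | rfl : a = i ∨ a = j := by tauto
        all_goals simp [Equiv.swap_apply_left, Equiv.swap_apply_right]
    · by_cases ha : a ≠ i ∧ a ≠ j
      · simpa [ha, Subtype.ext_iff] using hτ.2 ⟨a, ha⟩
      · obtain rfl | rfl : a = i ∨ a = j := by tauto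
        all_goals simp [hij, hij.symm]
  · intro σ hσ
    obtain ⟨hσσ, hfix⟩ := mem_perfectMatchings.1 (mem_filter.1 hσ).1
    simp only [mem_perfectMatchings, Subtype.ext_iff, Equiv.Perm.subtypePerm_apply]
    exact ⟨fun k => hσσ k, fun k h => hfix k (congrArg Subtype.val h)⟩
  · intro τ _
    ext k
    simp [Equiv.swap_mul_ofSubtype_apply, k.2]
  · intro σ hσ
    obtain ⟨⟨hσσ, -⟩, hσi⟩ := mem_filter.1 hσ |>.imp_left mem_perfectMatchings.1
    have hσj : σ j = i := by rw [← hσi, hσσ]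
    ext a
    by_cases ha : a ≠ i ∧ a ≠ j
    · simp [Equiv.swap_mul_ofSubtype_apply, ha]
    · obtain rfl | rfl : a = i ∨ a = j := by tauto
      all_goals simp [Equiv.swap_mul_ofSubtype_apply, hσi, hσj]
  · intro τ _
    refine prod_bij' (fun k _ => k.1) (fun a ha => ⟨a, (mem_filter.1 ha).2.2⟩) ?_ ?_
      (fun _ _ => rfl) (fun _ _ => rfl) ?_
    · intro k hk
      simpa [Equiv.swap_mul_ofSubtype_apply, k.2] using hk
    · intro a ha
      obtain ⟨hlt, hai, haj⟩ := (mem_filter.1 ha).2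
      simpa [Equiv.swap_mul_ofSubtype_apply, hai, haj, ← Subtype.coe_lt_coe] using hlt
    · intro k _
      simp [delTwo, Equiv.swap_mul_ofSubtype_apply, k.2]

/-- The derivative of `hafnian` at `B` in the direction `B'`, expanded by the product rule. -/
def hafnianDirDeriv (B B' : Matrix ι ι R) : R :=
  ∑ σ ∈ perfectMatchings ι, ∑ k ∈ univ.filter (fun k => k < σ k),
    (∏ l ∈ (univ.filter fun l => l < σ l).erase k, B l (σ l)) * B' k (σ k)

theorem two_nsmul_hafnianDirDeriv (B B' : Matrix ι ι R) (hB' : B'.IsSymm) :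
    2 • hafnianDirDeriv B B' =
      ∑ i, ∑ j ∈ univ.filter (fun j => j ≠ i), B' i j * hafnian (delTwo B i j) := by
  set g : Equiv.Perm ι → ι → R := fun σ k =>
    B' k (σ k) * ∏ l ∈ univ.filter (fun l => l < σ l ∧ l ≠ k ∧ l ≠ σ k), B l (σ l) with hg
  have hσ : ∀ σ ∈ perfectMatchings ι,
      2 • ∑ k ∈ univ.filter (fun k => k < σ k),
        (∏ l ∈ (univ.filter fun l => l < σ l).erase k, B l (σ l)) * B' k (σ k) =
      ∑ k, g σ k := by
    intro σ hσ
    obtain ⟨hσσ, hfix⟩ := mem_perfectMatchings.1 hσ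
    rw [← two_nsmul_sum_filter_lt_apply hσσ hfix]
    · congr 1
      refine sum_congr rfl fun k hk => ?_
      rw [filter_lt_apply_erase hσσ (mem_filter.1 hk).2, mul_comm]
    · intro k
      simp only [hg, hσσ, hB'.apply]
      congr 2
      ext l
      simp only [mem_filter]
      tauto
  calc 2 • hafnianDirDeriv B B' = ∑ σ ∈ perfectMatchings ι, ∑ k, g σ k := by
        rw [hafnianDirDeriv, smul_sum]
        exact sum_congr rfl hσ
    _ = ∑ i, ∑ j, ∑ σ ∈ (perfectMatchings ι).filter (fun σ => σ i = j), g σ i := by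
        rw [sum_comm]
        exact sum_congr rfl fun i _ =>
          (sum_fiberwise (perfectMatchings ι) (fun σ => σ i) (fun σ => g σ i)).symm
    _ = _ := by
        refine sum_congr rfl fun i _ => ?_
        rw [sum_filter]
        refine sum_congr rfl fun j _ => ?_
        split_ifs with hji
        · rw [hafnian_delTwo B (Ne.symm hji), mul_sum]
          refine sum_congr rfl fun σ hσ => ?_
          simp only [hg, (mem_filter.1 hσ).2]
        · refine sum_eq_zero fun σ hσ => ?_
          obtain ⟨hσ, hσi⟩ := mem_filter.1 hσ
          exact absurd (hσi.trans (not_not.1 hji)) ((mem_perfectMatchings.1 hσ).2 i)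

end Hafnian

theorem Matrix.IsSymm.of_hasDerivAt {𝕜 F ι : Type*} [NontriviallyNormedField 𝕜]
    [NormedAddCommGroup F] [NormedSpace 𝕜 F] {B : 𝕜 → Matrix ι ι F} {B' : Matrix ι ι F}
    {θ₀ : 𝕜} (hB : ∀ θ, (B θ).IsSymm)
    (hB' : ∀ i j, HasDerivAt (fun θ => B θ i j) (B' i j) θ₀) : B'.IsSymm :=
  IsSymm.ext fun i j => (hB' j i).unique <| by simpa only [(hB _).apply] using hB' i j

section HafnianHasDerivAt

variable {𝕜 ι : Type*} [NontriviallyNormedField 𝕜] [Fintype ι] [LinearOrder ι]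
  {B : 𝕜 → Matrix ι ι 𝕜} {B' : Matrix ι ι 𝕜} {θ₀ : 𝕜}

theorem hasDerivAt_hafnian (hB' : ∀ i j, HasDerivAt (fun θ => B θ i j) (B' i j) θ₀) :
    HasDerivAt (fun θ => hafnian (B θ)) (hafnianDirDeriv (B θ₀) B') θ₀ := by
  simp only [hafnian_eq_sum_perfectMatchings, hafnianDirDeriv, ← smul_eq_mul (a := ∏ _ ∈ _, _)]
  exact HasDerivAt.fun_sum fun σ _ => HasDerivAt.fun_finsetProd fun k _ => hB' k (σ k)

theorem hasDerivAt_hafnian_of_isSymm [NeZero (2 : 𝕜)]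
    (hB' : ∀ i j, HasDerivAt (fun θ => B θ i j) (B' i j) θ₀) (hsymm : B'.IsSymm) :
    HasDerivAt (fun θ => hafnian (B θ))
      (1 / 2 * ∑ i, ∑ j ∈ univ.filter (fun j => j ≠ i), B' i j * hafnian (delTwo (B θ₀) i j))
      θ₀ := by
  refine (hasDerivAt_hafnian hB').congr_deriv ?_
  rw [← two_nsmul_hafnianDirDeriv _ _ hsymm, two_nsmul, ← two_mul, ← mul_assoc]
  field_simp

end HafnianHasDerivAt

theorem hasDerivAt_gbs_prob_general {m : ℕ}
    (𝒜 : ℝ → Matrix (Fin (2 * m)) (Fin (2 * m)) ℝ)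
    (𝒜' : Matrix (Fin (2 * m)) (Fin (2 * m)) ℝ) (θ₀ : ℝ)
    (hsymm : ∀ θ, (𝒜 θ).IsSymm)
    (hdiff : ∀ i j, HasDerivAt (fun θ => 𝒜 θ i j) (𝒜' i j) θ₀)
    (hpos : ∀ᶠ θ in nhds θ₀, 0 < (1 - Xswap m * 𝒜 θ).det)
    (n : Fin m → ℕ) :
    HasDerivAt
      (fun θ => Real.sqrt (1 - Xswap m * 𝒜 θ).det * hafnian (repMat (𝒜 θ) (doubled n)) /
        ∏ i, (Nat.factorial (n i) : ℝ))
      (-(1 / 2) * Matrix.trace ((Xswap m - 𝒜 θ₀)⁻¹ * 𝒜') *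
          (Real.sqrt (1 - Xswap m * 𝒜 θ₀).det * hafnian (repMat (𝒜 θ₀) (doubled n)) /
            ∏ i, (Nat.factorial (n i) : ℝ)) +
        Real.sqrt (1 - Xswap m * 𝒜 θ₀).det / (∏ i, (Nat.factorial (n i) : ℝ)) * ((1 / 2) *
          ∑ i, ∑ j ∈ Finset.univ.filter (fun j => j ≠ i),
            repMat 𝒜' (doubled n) i j *
              hafnian (delTwo (repMat (𝒜 θ₀) (doubled n)) i j))) θ₀ := by
  have hsqrt := hasDerivAt_sqrt_det_one_sub_Xswap_mul hdiff hpos.self_of_nhds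
  -- The type is spelled out so that `ring` sees the instances of the goal, not those via `𝕜`.
  have hhaf : HasDerivAt (fun θ => hafnian (repMat (𝒜 θ) (doubled n)))
      (1 / 2 * ∑ i, ∑ j ∈ univ.filter (fun j => j ≠ i),
        repMat 𝒜' (doubled n) i j * hafnian (delTwo (repMat (𝒜 θ₀) (doubled n)) i j)) θ₀ :=
    hasDerivAt_hafnian_of_isSymm (fun _ _ => hdiff _ _)
      ((IsSymm.of_hasDerivAt hsymm hdiff).submatrix _)
  refine ((hsqrt.mul hhaf).div_const _).congr_deriv ?_
  ring

/-- the derivative at `θ₀` of the GBS probability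
`P(θ, n̄) = det(I − X·𝒜(θ))^{1/2} · Haf(𝒜(θ)_{n̄⊕n̄}) / (n_1!⋯n_m!)` for a family `𝒜` of
symmetric `2m × 2m` matrices (entrywise derivative `𝒜'` at `θ₀`, `X − 𝒜(θ₀)` invertible,
`det(I − X·𝒜) > 0` near `θ₀`) equals
`−(1/2)·Tr[(X−𝒜)⁻¹𝒜']·P(θ₀,n̄) + det(I−X𝒜)^{1/2}/(n̄!)·(1/2)·Σ_{i≠j} ((𝒜')_{n̄⊕n̄})_{ij}·Haf((𝒜_{n̄⊕n̄})_{−i−j})`. -/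
theorem hasDerivAt_gbs_prob {m : ℕ}
    (𝒜 : ℝ → Matrix (Fin (2 * m)) (Fin (2 * m)) ℝ)
    (𝒜' : Matrix (Fin (2 * m)) (Fin (2 * m)) ℝ) (θ₀ : ℝ)
    (hsymm : ∀ θ, (𝒜 θ).IsSymm)
    (hdiff : ∀ i j, HasDerivAt (fun θ => 𝒜 θ i j) (𝒜' i j) θ₀)
    (hinv : IsUnit (Xswap m - 𝒜 θ₀))
    (hpos : ∀ᶠ θ in nhds θ₀, 0 < (1 - Xswap m * 𝒜 θ).det)
    (n : Fin m → ℕ) :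
    HasDerivAt
      (fun θ => Real.sqrt (1 - Xswap m * 𝒜 θ).det * hafnian (repMat (𝒜 θ) (doubled n)) /
        ∏ i, (Nat.factorial (n i) : ℝ))
      (-(1 / 2) * Matrix.trace ((Xswap m - 𝒜 θ₀)⁻¹ * 𝒜') *
          (Real.sqrt (1 - Xswap m * 𝒜 θ₀).det * hafnian (repMat (𝒜 θ₀) (doubled n)) /
            ∏ i, (Nat.factorial (n i) : ℝ)) +
        Real.sqrt (1 - Xswap m * 𝒜 θ₀).det / (∏ i, (Nat.factorial (n i) : ℝ)) * ((1 / 2) *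
          ∑ i, ∑ j ∈ Finset.univ.filter (fun j => j ≠ i),
            repMat 𝒜' (doubled n) i j *
              hafnian (delTwo (repMat (𝒜 θ₀) (doubled n)) i j))) θ₀ :=
  hasDerivAt_gbs_prob_general 𝒜 𝒜' θ₀ hsymm hdiff hpos n
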